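/- arXiv:1512.06763 — 2 statements merged into one kernel-verified Lean document; each statement's English description precedes it below -/
import Mathlib

section
/- Let z : ℝ → ℝ be a solution of z' = A(t)z + B(t)z² with A = a + c, B = b + d, where a, b, c, d are continuous. Define x(t) = β·exp(∫₀ᵗ (a(s) + b(s)z(s)) ds) and y(t) = γ·exp(∫₀ᵗ (c(s) + d(s)z(s)) ds) for constants β, γ with β·γ·exp-product equal to z (i.e., x(t)y(t) = z(t) for all t, which holds when βγ = z(0)). Then (x, y) solves the homogeneous coupled system x' = a x + b x² y, y' = c y + d y² x. -/
/-!
A Bernoulli solution also solves the linear equation `z' = ((a + b z) + (c + d z)) z`, so it is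
`z 0` times the exponential of a primitive of that coefficient; with `β γ = z 0` this says
`z = x y`. By construction `x' = (a + b z) x` and `y' = (c + d z) y`, and substituting `z = x y`
gives the system.
-/

open Real

theorem eq_mul_exp_sub_of_hasDerivAt {z g F : ℝ → ℝ} (hF : ∀ t, HasDerivAt F (g t) t)
    (hz : ∀ t, HasDerivAt z (g t * z t) t) (t₀ t : ℝ) :
    z t = z t₀ * exp (F t - F t₀) := by
  have hconst : ∀ t, HasDerivAt (fun u => z u * exp (-F u)) 0 t := fun t =>
    ((hz t).mul (hF t).neg.exp).congr_deriv (by ring)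
  have hzt := is_const_of_deriv_eq_zero (fun u => (hconst u).differentiableAt)
    (fun u => (hconst u).deriv) t t₀
  calc z t = z t * exp (-F t) * exp (F t) := by rw [mul_assoc, ← exp_add]; simp
    _ = z t₀ * exp (F t - F t₀) := by rw [hzt, mul_assoc, ← exp_add]; ring_nf

theorem hasDerivAt_of_eq_const_mul_exp {x F f : ℝ → ℝ} {β : ℝ} (hx : ∀ t, x t = β * exp (F t))
    (hF : ∀ t, HasDerivAt F (f t) t) (t : ℝ) : HasDerivAt x (f t * x t) t :=
  (((hF t).exp.const_mul β).congr_deriv (by rw [hx t]; ring)).congr_of_eventuallyEq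
    (Filter.Eventually.of_forall hx)

theorem stmt_2 (a b c d z : ℝ → ℝ)
    (ha : Continuous a) (hb : Continuous b) (hc : Continuous c) (hd : Continuous d)
    (hzc : Continuous z)
    (hz : ∀ t, HasDerivAt z ((a t + c t) * z t + (b t + d t) * z t ^ 2) t)
    (β γ : ℝ) (hβγ : β * γ = z 0)
    (x y : ℝ → ℝ)
    (hx : ∀ t, x t = β * Real.exp (∫ s in (0:ℝ)..t, (a s + b s * z s)))
    (hy : ∀ t, y t = γ * Real.exp (∫ s in (0:ℝ)..t, (c s + d s * z s))) :
    ∀ t, HasDerivAt x (a t * x t + b t * x t ^ 2 * y t) t ∧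
      HasDerivAt y (c t * y t + d t * y t ^ 2 * x t) t := by
  have hF : ∀ t, HasDerivAt (fun u => ∫ s in (0:ℝ)..u, (a s + b s * z s)) (a t + b t * z t) t :=
    fun t => ((ha.add (hb.mul hzc)).integral_hasStrictDerivAt 0 t).hasDerivAt
  have hG : ∀ t, HasDerivAt (fun u => ∫ s in (0:ℝ)..u, (c s + d s * z s)) (c t + d t * z t) t :=
    fun t => ((hc.add (hd.mul hzc)).integral_hasStrictDerivAt 0 t).hasDerivAt
  have hz_exp : ∀ t, z t = z 0 *
      exp ((∫ s in (0:ℝ)..t, (a s + b s * z s)) + ∫ s in (0:ℝ)..t, (c s + d s * z s)) := fun t => by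
    simpa using eq_mul_exp_sub_of_hasDerivAt (fun t => (hF t).add (hG t))
      (fun t => (hz t).congr_deriv (by ring)) 0 t
  have hxy : ∀ t, x t * y t = z t := fun t => by
    rw [hx, hy, hz_exp t, ← hβγ, exp_add]; ring
  intro t
  refine ⟨(hasDerivAt_of_eq_const_mul_exp hx hF t).congr_deriv ?_,
    (hasDerivAt_of_eq_const_mul_exp hy hG t).congr_deriv ?_⟩ <;> rw [← hxy t] <;> ring
end

section
/- Suppose b(t) = d(t) for all t, and g(t)/f(t) = λ·exp(∫₀ᵗ (c(s) − a(s)) ds) for some constant λ (with f nonvanishing). Set φ(t) = g(t)/f(t). If x : ℝ → ℝ solves the Abel equation x' = f(t) + a(t)x + b(t)φ(t)x³, then the pair (x, y) with y(t) = φ(t)x(t) solves the non-homogeneous coupled system x' = a x + b x² y + f, y' = c y + d y² x + g. -/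
/-!
Since `φ = λ · exp (∫₀ᵗ (c - a))`, it satisfies `φ' = (c - a) φ`. Differentiating `y = φ x` and
substituting the Abel equation for `x'` then gives
`y' = (c - a) φ x + φ (f + a x + b φ x³) = c y + b y² x + φ f`, and `φ f = g`, `b = d` finish the
second equation; the first one is the Abel equation itself, since `b x² y = b φ x³`.
-/

open Real

theorem hasDerivAt_const_mul_exp_integral {h : ℝ → ℝ} (hh : Continuous h) (lam t₀ t : ℝ) :
    HasDerivAt (fun u => lam * exp (∫ s in t₀..u, h s))
      (h t * (lam * exp (∫ s in t₀..t, h s))) t :=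
  ((hh.integral_hasStrictDerivAt t₀ t).hasDerivAt.exp.const_mul lam).congr_deriv (by ring)

theorem hasDerivAt_mul_of_abel {φ x : ℝ → ℝ} {a b c f t : ℝ}
    (hφ : HasDerivAt φ ((c - a) * φ t) t)
    (hx : HasDerivAt x (f + a * x t + b * φ t * x t ^ 3) t) :
    HasDerivAt (fun t => φ t * x t)
      (c * (φ t * x t) + b * (φ t * x t) ^ 2 * x t + φ t * f) t :=
  (hφ.mul hx).congr_deriv (by ring)

theorem stmt_3 (a b c d f g : ℝ → ℝ) (φ : ℝ → ℝ) (lam : ℝ)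
    (ha : Continuous a) (hc : Continuous c)
    (hbd : ∀ t, b t = d t) (hf : ∀ t, f t ≠ 0)
    (hφ : ∀ t, φ t = g t / f t)
    (hprop : ∀ t, g t / f t = lam * Real.exp (∫ s in (0:ℝ)..t, (c s - a s)))
    (x : ℝ → ℝ)
    (hx : ∀ t, HasDerivAt x (f t + a t * x t + b t * φ t * x t ^ 3) t) :
    ∀ t, HasDerivAt x (a t * x t + b t * x t ^ 2 * (φ t * x t) + f t) t ∧
      HasDerivAt (fun t => φ t * x t)
        (c t * (φ t * x t) + d t * (φ t * x t) ^ 2 * x t + g t) t := by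
  have hφ_eq : φ = fun t => lam * exp (∫ s in (0:ℝ)..t, (c s - a s)) :=
    funext fun t => (hφ t).trans (hprop t)
  have hφ' : ∀ t, HasDerivAt φ ((c t - a t) * φ t) t := fun t => by
    rw [hφ_eq]
    exact hasDerivAt_const_mul_exp_integral (hc.sub ha) lam 0 t
  have hg : ∀ t, g t = φ t * f t := fun t => by rw [hφ t, div_mul_cancel₀ _ (hf t)]
  intro t
  refine ⟨(hx t).congr_deriv (by ring), ?_⟩
  rw [hg t, ← hbd t]
  exact hasDerivAt_mul_of_abel (hφ' t) (hx t)
end
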